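/- arXiv:math/0107038 — 2 statements merged into one kernel-verified Lean document; each statement's English description precedes it below -/
import Mathlib

section
/- Let K be a compact topological group with Haar probability measure μ, acting continuously on a Hausdorff topological space M, and let f : M → ℝ be a continuous nonnegative proper function. Then the averaged function g(x) = ∫_K f(k • x) dμ(k) is a proper map M → ℝ. -/
open MeasureTheory

/-- Averaging a continuous nonnegative proper function over a compact group with
its Haar probability measure yields a proper function. -/
theorem averaged_function_proper
    {K M : Type*} [Group K] [TopologicalSpace K] [CompactSpace K] [IsTopologicalGroup K]
    [MeasurableSpace K] [BorelSpace K]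
    [TopologicalSpace M] [T2Space M] [MulAction K M] [ContinuousSMul K M]
    (μ : Measure K) [IsProbabilityMeasure μ]
    [μ.IsMulLeftInvariant] [μ.IsMulRightInvariant]
    (f : M → ℝ) (hf : Continuous f) (hf0 : ∀ x, 0 ≤ f x)
    (hproper : ∀ C : Set ℝ, IsCompact C → IsCompact (f ⁻¹' C)) :
    ∀ C : Set ℝ, IsCompact C → IsCompact ((fun x : M => ∫ k, f (k • x) ∂μ) ⁻¹' C) := by
  intro C hC
  set g : M → ℝ := fun x => ∫ k, f (k • x) ∂μ with hg
  obtain ⟨c, hc⟩ := hC.bddAbove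
  have hS : IsCompact (f ⁻¹' Set.Icc 0 c) := hproper _ isCompact_Icc
  set T : Set M := (fun p : K × M => p.1 • p.2) '' (Set.univ ×ˢ (f ⁻¹' Set.Icc 0 c)) with hTdef
  have hT : IsCompact T := (isCompact_univ.prod hS).image continuous_smul
  have hcont : ∀ x : M, Continuous fun k : K => f (k • x) :=
    fun x => hf.comp (continuous_id.smul continuous_const)
  have hint : ∀ x : M, Integrable (fun k : K => f (k • x)) μ :=
    fun x => (hcont x).integrable_of_hasCompactSupport
      (HasCompactSupport.of_compactSpace _)
  -- key inclusion
  have hsub : g ⁻¹' C ⊆ T := by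
    intro x hx
    have hgx : g x ≤ c := hc hx
    obtain ⟨k0, -, hmin⟩ :=
      isCompact_univ.exists_isMinOn Set.univ_nonempty (hcont x).continuousOn
    have h1 : f (k0 • x) ≤ g x := by
      have := integral_mono (integrable_const (f (k0 • x))) (hint x)
        (fun k => hmin (Set.mem_univ k))
      simpa using this
    have hmem : k0 • x ∈ f ⁻¹' Set.Icc 0 c := ⟨hf0 _, le_trans h1 hgx⟩
    exact ⟨(k0⁻¹, k0 • x), ⟨Set.mem_univ _, hmem⟩, inv_smul_smul k0 x⟩
  -- continuity of g restricted to T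
  haveI : CompactSpace T := isCompact_iff_compactSpace.mp hT
  -- the integration functional on C(K, ℝ) is Lipschitz
  have hintCM : ∀ φ : C(K, ℝ), Integrable (⇑φ) μ := fun φ =>
    φ.continuous.integrable_of_hasCompactSupport (HasCompactSupport.of_compactSpace _)
  have hlip : LipschitzWith 1 (fun φ : C(K, ℝ) => ∫ k, φ k ∂μ) := by
    apply LipschitzWith.of_dist_le_mul
    intro φ ψ
    rw [dist_eq_norm, dist_eq_norm, ← integral_sub (hintCM φ) (hintCM ψ)]
    calc ‖∫ k, (φ k - ψ k) ∂μ‖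
        ≤ ‖φ - ψ‖ * (μ Set.univ).toReal := by
          refine norm_integral_le_of_norm_le_const ?_
          filter_upwards with k
          simpa using (φ - ψ).norm_coe_le_norm k
      _ = 1 * ‖φ - ψ‖ := by simp
  -- curry the continuous map (t, k) ↦ f (k • t)
  set Φ : C(T, C(K, ℝ)) :=
    ContinuousMap.curry ⟨fun p : T × K => f (p.2 • (p.1 : M)),
      hf.comp (continuous_snd.smul (continuous_subtype_val.comp continuous_fst))⟩ with hΦ
  have hGcont : Continuous fun t : T => ∫ k, f (k • (t : M)) ∂μ := by
    have : (fun t : T => ∫ k, f (k • (t : M)) ∂μ)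
        = (fun φ : C(K, ℝ) => ∫ k, φ k ∂μ) ∘ fun t => Φ t := rfl
    rw [this]
    exact hlip.continuous.comp Φ.continuous
  have hGclosed : IsClosed ((fun t : T => ∫ k, f (k • (t : M)) ∂μ) ⁻¹' C) :=
    hC.isClosed.preimage hGcont
  have heq : g ⁻¹' C = Subtype.val '' ((fun t : T => ∫ k, f (k • (t : M)) ∂μ) ⁻¹' C) := by
    ext x
    constructor
    · intro hx
      exact ⟨⟨x, hsub hx⟩, hx, rfl⟩
    · rintro ⟨t, ht, rfl⟩
      exact ht
  rw [heq]
  exact (hGclosed.isCompact).image continuous_subtype_val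
end

section
/- Let X₃ = {(x, y) ∈ ℝ² : y = 1 ∨ (y = 0 ∧ x ≠ 0)} with the subspace topology, with the equivalence relation identifying points with equal first coordinate. The point p = (0, 1) is its own equivalence class (a fixed point), but p is not stable: there is an open neighborhood V of p in X₃ (e.g. V = X₃ ∩ (ball of radius 1/2 around (0,1))) such that no open set U with p ∈ U ⊆ V is saturated for the equivalence relation. -/
/-- Example: on `X₃`, the union of the line `y = 1` and the punctured line `y = 0`
(origin removed), with points equivalent when they share first coordinate, the
point `(0,1)` is its own equivalence class but is not stable: some open
neighborhood `V` of it contains no saturated open neighborhood. -/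
theorem twocharts_fixed_point_not_stable :
    ∀ p : {q : ℝ × ℝ // q.2 = 1 ∨ (q.2 = 0 ∧ q.1 ≠ 0)}, p.1 = (0, 1) →
    (∀ q : {q : ℝ × ℝ // q.2 = 1 ∨ (q.2 = 0 ∧ q.1 ≠ 0)}, q.1.1 = p.1.1 → q = p) ∧
    ∃ V : Set {q : ℝ × ℝ // q.2 = 1 ∨ (q.2 = 0 ∧ q.1 ≠ 0)},
      IsOpen V ∧ p ∈ V ∧
      ¬ ∃ U : Set {q : ℝ × ℝ // q.2 = 1 ∨ (q.2 = 0 ∧ q.1 ≠ 0)},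
          IsOpen U ∧ p ∈ U ∧ U ⊆ V ∧
          ∀ u ∈ U, ∀ v : {q : ℝ × ℝ // q.2 = 1 ∨ (q.2 = 0 ∧ q.1 ≠ 0)},
            v.1.1 = u.1.1 → v ∈ U := by
  intro p hp
  constructor
  · intro q hq
    rw [hp] at hq
    apply Subtype.ext
    rcases q.2 with h | ⟨h0, hne⟩
    · rw [hp]; exact Prod.ext hq h
    · exact absurd hq hne
  · refine ⟨Subtype.val ⁻¹' {v : ℝ × ℝ | 0 < v.2},
      (isOpen_lt continuous_const continuous_snd).preimage continuous_subtype_val,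
      by simp [hp], ?_⟩
    rintro ⟨U, hUo, hpU, hUV, hsat⟩
    obtain ⟨ε, hε, hball⟩ := Metric.isOpen_iff.mp hUo p hpU
    set x : ℝ := ε / 2 with hx
    have hxpos : 0 < x := half_pos hε
    have hq1 : (⟨(x, 1), Or.inl rfl⟩ :
        {q : ℝ × ℝ // q.2 = 1 ∨ (q.2 = 0 ∧ q.1 ≠ 0)}) ∈ U := by
      apply hball
      rw [Metric.mem_ball, Subtype.dist_eq, hp, Prod.dist_eq]
      simp only [Prod.fst, Prod.snd, dist_self, Real.dist_eq, sub_zero, abs_of_pos hxpos]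
      rw [max_eq_left hxpos.le]
      linarith
    have hq0 : (⟨(x, 0), Or.inr ⟨rfl, ne_of_gt hxpos⟩⟩ :
        {q : ℝ × ℝ // q.2 = 1 ∨ (q.2 = 0 ∧ q.1 ≠ 0)}) ∈ U :=
      hsat _ hq1 _ rfl
    have := hUV hq0
    simp at this
end
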